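/- For n ≥ 6 and 1 < d < n-4, the number F(n,d) of standard Young tableaux of shape (d+1, 2, 1^(n-d-3)) satisfies the recursion F(n,d) = F(n-1, d-1) + F(n-1, d) + C(n-2, d). -/
import Mathlib


/-- `c = (i, j)` is a cell of the Young diagram with row lengths `shape`
(row `i`, column `j`, both `0`-indexed). -/
def IsCell (shape : List ℕ) (c : ℕ × ℕ) : Prop := c.2 < shape.getD c.1 0

/-- `T` is a standard Young tableau of shape `shape`: it vanishes off the diagram,
its entries on the diagram are a filling by the distinct values `1, …, N`
(`N` the number of boxes), and entries increase along rows and down columns. -/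
def IsSYT (shape : List ℕ) (T : ℕ × ℕ → ℕ) : Prop :=
  (∀ c, ¬ IsCell shape c → T c = 0) ∧
  (∀ c, IsCell shape c → 1 ≤ T c ∧ T c ≤ shape.sum) ∧
  (∀ c c', IsCell shape c → IsCell shape c' → T c = T c' → c = c') ∧
  (∀ i j, IsCell shape (i, j + 1) → T (i, j) < T (i, j + 1)) ∧
  (∀ i j, IsCell shape (i + 1, j) → T (i, j) < T (i + 1, j))

/-- The number of standard Young tableaux of shape `shape`. -/
noncomputable def sytCount (shape : List ℕ) : ℕ :=
  Nat.card {T : ℕ × ℕ → ℕ // IsSYT shape T}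

namespace SYTAux

/-- Finset of cells of a shape. -/
def cells : List ℕ → Finset (ℕ × ℕ)
  | [] => ∅
  | a :: s => (Finset.range a).image (fun j => (0, j)) ∪ (cells s).image (fun c => (c.1 + 1, c.2))

lemma mem_cells : ∀ (s : List ℕ) (c : ℕ × ℕ), c ∈ cells s ↔ IsCell s c
  | [], c => by simp [cells, IsCell]
  | a :: s, (0, j) => by
      simp [cells, IsCell, Prod.ext_iff]
  | a :: s, (i+1, j) => by
      simp only [cells, Finset.mem_union, Finset.mem_image, Finset.mem_range, Prod.ext_iff]
      constructor
      · rintro (⟨x, hx, h0, hj⟩ | ⟨c, hc, hi, hj⟩)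
        · omega
        · subst hj
          have := (mem_cells s c).1 hc
          simpa [IsCell, ← hi] using this
      · intro h
        right
        exact ⟨(i, j), (mem_cells s (i, j)).2 (by simpa [IsCell] using h), rfl, rfl⟩

lemma card_cells : ∀ s : List ℕ, (cells s).card = s.sum
  | [] => by simp [cells]
  | a :: s => by
      rw [cells, Finset.card_union_of_disjoint, Finset.card_image_of_injective,
        Finset.card_image_of_injective, Finset.card_range, card_cells s, List.sum_cons]
      · intro c c' h; simpa [Prod.ext_iff] using h
      · intro x y h; simpa using h
      · rw [Finset.disjoint_left]
        rintro c hc hc'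
        simp only [Finset.mem_image, Finset.mem_range] at hc hc'
        obtain ⟨x, _, rfl⟩ := hc
        obtain ⟨y, _, h⟩ := hc'
        exact absurd (congrArg Prod.fst h) (by simp)

lemma finite_syt (s : List ℕ) : {T : ℕ × ℕ → ℕ | IsSYT s T}.Finite := by
  classical
  have : Set.InjOn (fun (T : ℕ × ℕ → ℕ) (c : cells s) => (⟨min (T c) s.sum, by omega⟩ : Fin (s.sum + 1)))
      {T | IsSYT s T} := by
    intro T hT T' hT' h
    funext c
    by_cases hc : IsCell s c
    · have h1 := (hT.2.1 c hc).2
      have h2 := (hT'.2.1 c hc).2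
      have := congrFun h (⟨c, (mem_cells s c).2 hc⟩ : cells s)
      simp only [Fin.mk.injEq] at this
      omega
    · rw [hT.1 c hc, hT'.1 c hc]
  exact Set.Finite.of_finite_image (Set.toFinite _) this

lemma exists_max (s : List ℕ) (T : ℕ × ℕ → ℕ) (hT : IsSYT s T) (hN : 1 ≤ s.sum) :
    ∃ c, IsCell s c ∧ T c = s.sum := by
  classical
  have hinj : Set.InjOn T (cells s) := by
    intro c hc c' hc' h
    exact hT.2.2.1 c c' ((mem_cells s c).1 hc) ((mem_cells s c').1 hc') h
  have hsub : (cells s).image T ⊆ Finset.Icc 1 s.sum := by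
    intro x hx
    simp only [Finset.mem_image] at hx
    obtain ⟨c, hc, rfl⟩ := hx
    have := hT.2.1 c ((mem_cells s c).1 hc)
    simp [Finset.mem_Icc, this.1, this.2]
  have hcard : ((cells s).image T).card = (Finset.Icc 1 s.sum).card := by
    rw [Finset.card_image_of_injOn (by simpa using hinj), card_cells, Nat.card_Icc]
    omega
  have heq : (cells s).image T = Finset.Icc 1 s.sum :=
    Finset.eq_of_subset_of_card_le hsub (le_of_eq hcard.symm)
  have : s.sum ∈ (cells s).image T := by
    rw [heq]; simp [Finset.mem_Icc]; omega
  simp only [Finset.mem_image] at this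
  obtain ⟨c, hc, h⟩ := this
  exact ⟨c, (mem_cells s c).1 hc, h⟩

end SYTAux

namespace SYTAux

lemma card_del (s s' : List ℕ) (c0 : ℕ × ℕ)
    (h1 : ∀ c, IsCell s c ↔ IsCell s' c ∨ c = c0)
    (h2 : ¬ IsCell s' c0)
    (h3 : s'.sum + 1 = s.sum)
    (h4 : ∀ i j, IsCell s' (i + 1, j) → IsCell s' (i, j))
    (h5 : ∀ i j, IsCell s (i + 1, j) → IsCell s (i, j)) :
    Nat.card {T : ℕ × ℕ → ℕ // IsSYT s T ∧ T c0 = s.sum} = sytCount s' := by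
  classical
  apply Nat.card_congr
  have hc0 : IsCell s c0 := (h1 c0).2 (Or.inr rfl)
  refine
    { toFun := fun T => ⟨fun c => if c = c0 then 0 else T.1 c, ?_⟩
      invFun := fun T => ⟨fun c => if c = c0 then s.sum else T.1 c, ?_, by simp⟩
      left_inv := ?_
      right_inv := ?_ }
  · -- forward: IsSYT s' of the restricted function
    obtain ⟨T, hT, hmax⟩ := T
    obtain ⟨t1, t2, t3, t4, t5⟩ := hT
    refine ⟨?_, ?_, ?_, ?_, ?_⟩
    · intro c hc
      by_cases h : c = c0
      · simp [h]
      · simp only [if_neg h]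
        exact t1 c (fun hcs => hc (((h1 c).1 hcs).resolve_right h))
    · intro c hc
      have hne : c ≠ c0 := fun h => h2 (h ▸ hc)
      have hcs : IsCell s c := (h1 c).2 (Or.inl hc)
      have hb := t2 c hcs
      have : T c ≠ s.sum := by
        intro h
        exact hne (t3 c c0 hcs hc0 (h.trans hmax.symm))
      simp only [if_neg hne]
      omega
    · intro c c' hc hc'
      have hne : c ≠ c0 := fun h => h2 (h ▸ hc)
      have hne' : c' ≠ c0 := fun h => h2 (h ▸ hc')
      simp only [if_neg hne, if_neg hne']
      exact t3 c c' ((h1 c).2 (Or.inl hc)) ((h1 c').2 (Or.inl hc'))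
    · intro i j hc
      have hl : IsCell s' (i, j) := by
        simp only [IsCell] at hc ⊢; omega
      have hne : (i, j) ≠ c0 := fun h => h2 (h ▸ hl)
      have hne' : (i, j + 1) ≠ c0 := fun h => h2 (h ▸ hc)
      simp only [if_neg hne, if_neg hne']
      exact t4 i j ((h1 _).2 (Or.inl hc))
    · intro i j hc
      have hl : IsCell s' (i, j) := h4 i j hc
      have hne : (i, j) ≠ c0 := fun h => h2 (h ▸ hl)
      have hne' : (i + 1, j) ≠ c0 := fun h => h2 (h ▸ hc)
      simp only [if_neg hne, if_neg hne']
      exact t5 i j ((h1 _).2 (Or.inl hc))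
  · -- backward: IsSYT s of the extended function
    obtain ⟨T, hT⟩ := T
    obtain ⟨t1, t2, t3, t4, t5⟩ := hT
    refine ⟨?_, ?_, ?_, ?_, ?_⟩
    · intro c hc
      have hne : c ≠ c0 := fun h => hc (h ▸ hc0)
      simp only [if_neg hne]
      exact t1 c (fun h => hc ((h1 c).2 (Or.inl h)))
    · intro c hc
      by_cases h : c = c0
      · simp only [if_pos h]; omega
      · simp only [if_neg h]
        have := t2 c (((h1 c).1 hc).resolve_right h)
        omega
    · intro c c' hc hc' heq
      by_cases h : c = c0 <;> by_cases h' : c' = c0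
      · exact h.trans h'.symm
      · exfalso
        simp only [if_pos h, if_neg h'] at heq
        have := t2 c' (((h1 c').1 hc').resolve_right h')
        omega
      · exfalso
        simp only [if_neg h, if_pos h'] at heq
        have := t2 c (((h1 c).1 hc).resolve_right h)
        omega
      · simp only [if_neg h, if_neg h'] at heq
        exact t3 c c' (((h1 c).1 hc).resolve_right h) (((h1 c').1 hc').resolve_right h') heq
    · intro i j hc
      have hlcell : IsCell s (i, j) := by
        simp only [IsCell] at hc ⊢; omega
      by_cases h : (i, j + 1) = c0
      · have hne : (i, j) ≠ c0 := by
          intro hh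
          have := h.trans hh.symm
          simp [Prod.ext_iff] at this
        have hl' : IsCell s' (i, j) := ((h1 _).1 hlcell).resolve_right hne
        have := t2 _ hl'
        simp only [if_pos h, if_neg hne]
        omega
      · have hl' : IsCell s' (i, j + 1) := ((h1 _).1 hc).resolve_right h
        have hlc : IsCell s' (i, j) := by
          simp only [IsCell] at hl' ⊢; omega
        have hne : (i, j) ≠ c0 := fun hh => h2 (hh ▸ hlc)
        simp only [if_neg h, if_neg hne]
        exact t4 i j hl'
    · intro i j hc
      have hlcell : IsCell s (i, j) := h5 i j hc
      by_cases h : (i + 1, j) = c0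
      · have hne : (i, j) ≠ c0 := by
          intro hh
          have := h.trans hh.symm
          simp [Prod.ext_iff] at this
        have hl' : IsCell s' (i, j) := ((h1 _).1 hlcell).resolve_right hne
        have := t2 _ hl'
        simp only [if_pos h, if_neg hne]
        omega
      · have hl' : IsCell s' (i + 1, j) := ((h1 _).1 hc).resolve_right h
        have hlc : IsCell s' (i, j) := h4 i j hl'
        have hne : (i, j) ≠ c0 := fun hh => h2 (hh ▸ hlc)
        simp only [if_neg h, if_neg hne]
        exact t5 i j hl'
  · rintro ⟨T, hT, hmax⟩
    ext c
    by_cases h : c = c0 <;> simp [h, hmax]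
  · rintro ⟨T, hT⟩
    ext c
    by_cases h : c = c0
    · simp only [h, if_pos rfl]
      exact (hT.1 c0 h2).symm
    · simp [h]

end SYTAux

namespace SYTAux

lemma ncard_part (s : List ℕ) (p : (ℕ × ℕ → ℕ) → Prop) :
    Nat.card {T : ℕ × ℕ → ℕ // IsSYT s T ∧ p T} = {T : ℕ × ℕ → ℕ | IsSYT s T ∧ p T}.ncard :=
  (Nat.card_coe_set_eq _).symm

lemma split2 (s : List ℕ) (c1 c2 : ℕ × ℕ) (hne : c1 ≠ c2)
    (hc1 : IsCell s c1) (hc2 : IsCell s c2) (hN : 1 ≤ s.sum)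
    (hmax : ∀ T c, IsSYT s T → IsCell s c → T c = s.sum → c = c1 ∨ c = c2) :
    sytCount s = Nat.card {T : ℕ × ℕ → ℕ // IsSYT s T ∧ T c1 = s.sum}
      + Nat.card {T : ℕ × ℕ → ℕ // IsSYT s T ∧ T c2 = s.sum} := by
  have hA : {T : ℕ × ℕ → ℕ | IsSYT s T} =
      {T | IsSYT s T ∧ T c1 = s.sum} ∪ {T | IsSYT s T ∧ T c2 = s.sum} := by
    ext T
    simp only [Set.mem_setOf_eq, Set.mem_union]
    constructor
    · intro hT
      obtain ⟨c, hc, hval⟩ := exists_max s T hT hN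
      rcases hmax T c hT hc hval with rfl | rfl
      · exact Or.inl ⟨hT, hval⟩
      · exact Or.inr ⟨hT, hval⟩
    · rintro (⟨h, _⟩ | ⟨h, _⟩) <;> exact h
  have hdisj : Disjoint {T : ℕ × ℕ → ℕ | IsSYT s T ∧ T c1 = s.sum}
      {T : ℕ × ℕ → ℕ | IsSYT s T ∧ T c2 = s.sum} := by
    rw [Set.disjoint_left]
    rintro T ⟨hT, h1⟩ ⟨_, h2⟩
    exact hne (hT.2.2.1 c1 c2 hc1 hc2 (h1.trans h2.symm))
  have hfin := finite_syt s
  have hf1 : {T : ℕ × ℕ → ℕ | IsSYT s T ∧ T c1 = s.sum}.Finite :=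
    hfin.subset (fun T hT => hT.1)
  have hf2 : {T : ℕ × ℕ → ℕ | IsSYT s T ∧ T c2 = s.sum}.Finite :=
    hfin.subset (fun T hT => hT.1)
  have : sytCount s = {T : ℕ × ℕ → ℕ | IsSYT s T}.ncard :=
    (Nat.card_coe_set_eq _).symm
  rw [this, hA, Set.ncard_union_eq hdisj hf1 hf2, ncard_part, ncard_part]

lemma split3 (s : List ℕ) (c1 c2 c3 : ℕ × ℕ) (h12 : c1 ≠ c2) (h13 : c1 ≠ c3) (h23 : c2 ≠ c3)
    (hc1 : IsCell s c1) (hc2 : IsCell s c2) (hc3 : IsCell s c3) (hN : 1 ≤ s.sum)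
    (hmax : ∀ T c, IsSYT s T → IsCell s c → T c = s.sum → c = c1 ∨ c = c2 ∨ c = c3) :
    sytCount s = Nat.card {T : ℕ × ℕ → ℕ // IsSYT s T ∧ T c1 = s.sum}
      + Nat.card {T : ℕ × ℕ → ℕ // IsSYT s T ∧ T c2 = s.sum}
      + Nat.card {T : ℕ × ℕ → ℕ // IsSYT s T ∧ T c3 = s.sum} := by
  have hA : {T : ℕ × ℕ → ℕ | IsSYT s T} =
      ({T | IsSYT s T ∧ T c1 = s.sum} ∪ {T | IsSYT s T ∧ T c2 = s.sum})
        ∪ {T | IsSYT s T ∧ T c3 = s.sum} := by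
    ext T
    simp only [Set.mem_setOf_eq, Set.mem_union]
    constructor
    · intro hT
      obtain ⟨c, hc, hval⟩ := exists_max s T hT hN
      rcases hmax T c hT hc hval with rfl | rfl | rfl
      · exact Or.inl (Or.inl ⟨hT, hval⟩)
      · exact Or.inl (Or.inr ⟨hT, hval⟩)
      · exact Or.inr ⟨hT, hval⟩
    · rintro ((⟨h, _⟩ | ⟨h, _⟩) | ⟨h, _⟩) <;> exact h
  have hfin := finite_syt s
  have hf1 : {T : ℕ × ℕ → ℕ | IsSYT s T ∧ T c1 = s.sum}.Finite :=
    hfin.subset (fun T hT => hT.1)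
  have hf2 : {T : ℕ × ℕ → ℕ | IsSYT s T ∧ T c2 = s.sum}.Finite :=
    hfin.subset (fun T hT => hT.1)
  have hf3 : {T : ℕ × ℕ → ℕ | IsSYT s T ∧ T c3 = s.sum}.Finite :=
    hfin.subset (fun T hT => hT.1)
  have hd12 : Disjoint {T : ℕ × ℕ → ℕ | IsSYT s T ∧ T c1 = s.sum}
      {T : ℕ × ℕ → ℕ | IsSYT s T ∧ T c2 = s.sum} := by
    rw [Set.disjoint_left]
    rintro T ⟨hT, ha⟩ ⟨_, hb⟩
    exact h12 (hT.2.2.1 c1 c2 hc1 hc2 (ha.trans hb.symm))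
  have hd3 : Disjoint ({T : ℕ × ℕ → ℕ | IsSYT s T ∧ T c1 = s.sum}
      ∪ {T : ℕ × ℕ → ℕ | IsSYT s T ∧ T c2 = s.sum})
      {T : ℕ × ℕ → ℕ | IsSYT s T ∧ T c3 = s.sum} := by
    rw [Set.disjoint_left]
    rintro T (⟨hT, ha⟩ | ⟨hT, ha⟩) ⟨_, hb⟩
    · exact h13 (hT.2.2.1 c1 c3 hc1 hc3 (ha.trans hb.symm))
    · exact h23 (hT.2.2.1 c2 c3 hc2 hc3 (ha.trans hb.symm))
  have : sytCount s = {T : ℕ × ℕ → ℕ | IsSYT s T}.ncard :=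
    (Nat.card_coe_set_eq _).symm
  rw [this, hA, Set.ncard_union_eq hd3 (hf1.union hf2) hf3,
    Set.ncard_union_eq hd12 hf1 hf2, ncard_part, ncard_part, ncard_part]

end SYTAux

namespace SYTAux

lemma getD_rep (m i : ℕ) : (List.replicate m (1 : ℕ)).getD i 0 = if i < m then 1 else 0 := by
  induction m generalizing i with
  | zero => simp
  | succ m ih =>
    cases i with
    | zero => simp [List.replicate_succ]
    | succ i =>
      rw [List.replicate_succ, List.getD_cons_succ, ih]
      simp [Nat.succ_lt_succ_iff]

lemma row_cell (a i j : ℕ) : IsCell [a] (i, j) ↔ i = 0 ∧ j < a := by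
  cases i with
  | zero => simp [IsCell]
  | succ i => simp [IsCell]

lemma col_cell (m i j : ℕ) : IsCell (List.replicate m 1) (i, j) ↔ i < m ∧ j = 0 := by
  simp only [IsCell, getD_rep]
  by_cases h : i < m <;> simp [h]

lemma row_count (a : ℕ) : sytCount [a] = 1 := by
  rw [sytCount, Nat.card_eq_one_iff_unique]
  have hsum : ([a] : List ℕ).sum = a := by simp
  constructor
  · constructor
    rintro ⟨T, hT⟩ ⟨T', hT'⟩
    have key : ∀ (S : ℕ × ℕ → ℕ), IsSYT [a] S → ∀ j, j < a → S (0, j) = j + 1 := by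
      intro S hS j hj
      have lower : ∀ j, j < a → j + 1 ≤ S (0, j) := by
        intro j hj
        induction j with
        | zero => exact (hS.2.1 (0, 0) ((row_cell a 0 0).2 ⟨rfl, by omega⟩)).1
        | succ j ih =>
          have := hS.2.2.2.1 0 j ((row_cell a 0 (j + 1)).2 ⟨rfl, hj⟩)
          have := ih (by omega)
          omega
      have upper : ∀ m j, j + m < a → S (0, j) + m ≤ S (0, j + m) := by
        intro m
        induction m with
        | zero => intro j _; simp
        | succ m ih =>
          intro j h
          have h1 := ih (j + 1) (by omega)
          have h2 := hS.2.2.2.1 0 j ((row_cell a 0 (j + 1)).2 ⟨rfl, by omega⟩)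
          have : j + 1 + m = j + (m + 1) := by omega
          rw [this] at h1
          omega
      have h1 := lower j hj
      have h2 := upper (a - 1 - j) j (by omega)
      have h3 := (hS.2.1 (0, j + (a - 1 - j)) ((row_cell a 0 _).2 ⟨rfl, by omega⟩)).2
      rw [hsum] at h3
      omega
    ext c
    obtain ⟨i, j⟩ := c
    show T (i, j) = T' (i, j)
    by_cases hc : IsCell [a] (i, j)
    · obtain ⟨rfl, hj⟩ := (row_cell a i j).1 hc
      rw [key T hT j hj, key T' hT' j hj]
    · rw [hT.1 _ hc, hT'.1 _ hc]
  · refine ⟨⟨fun c => if c.1 = 0 ∧ c.2 < a then c.2 + 1 else 0, ?_, ?_, ?_, ?_, ?_⟩⟩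
    · intro c hc
      dsimp only
      rw [if_neg]
      intro ⟨h1, h2⟩
      exact hc ((row_cell a c.1 c.2).2 (by exact ⟨h1, h2⟩))
    · intro c hc
      obtain ⟨h1, h2⟩ := (row_cell a c.1 c.2).1 hc
      dsimp only
      rw [if_pos ⟨h1, h2⟩, hsum]
      omega
    · intro c c' hc hc' h
      obtain ⟨h1, h2⟩ := (row_cell a c.1 c.2).1 hc
      obtain ⟨h1', h2'⟩ := (row_cell a c'.1 c'.2).1 hc'
      dsimp only at h
      rw [if_pos ⟨h1, h2⟩, if_pos ⟨h1', h2'⟩] at h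
      exact Prod.ext (h1.trans h1'.symm) (by omega)
    · intro i j hc
      obtain ⟨rfl, hj⟩ := (row_cell a i (j + 1)).1 hc
      dsimp only
      rw [if_pos ⟨rfl, by omega⟩, if_pos ⟨rfl, hj⟩]
      omega
    · intro i j hc
      obtain ⟨h, _⟩ := (row_cell a (i + 1) j).1 hc
      omega

lemma col_count (m : ℕ) : sytCount (List.replicate m 1) = 1 := by
  rw [sytCount, Nat.card_eq_one_iff_unique]
  have hsum : (List.replicate m (1 : ℕ)).sum = m := by simp
  constructor
  · constructor
    rintro ⟨T, hT⟩ ⟨T', hT'⟩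
    have key : ∀ (S : ℕ × ℕ → ℕ), IsSYT (List.replicate m 1) S → ∀ i, i < m → S (i, 0) = i + 1 := by
      intro S hS i hi
      have lower : ∀ i, i < m → i + 1 ≤ S (i, 0) := by
        intro i hi
        induction i with
        | zero => exact (hS.2.1 (0, 0) ((col_cell m 0 0).2 ⟨by omega, rfl⟩)).1
        | succ i ih =>
          have := hS.2.2.2.2 i 0 ((col_cell m (i + 1) 0).2 ⟨hi, rfl⟩)
          have := ih (by omega)
          omega
      have upper : ∀ p i, i + p < m → S (i, 0) + p ≤ S (i + p, 0) := by
        intro p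
        induction p with
        | zero => intro i _; simp
        | succ p ih =>
          intro i h
          have h1 := ih (i + 1) (by omega)
          have h2 := hS.2.2.2.2 i 0 ((col_cell m (i + 1) 0).2 ⟨by omega, rfl⟩)
          have : i + 1 + p = i + (p + 1) := by omega
          rw [this] at h1
          omega
      have h1 := lower i hi
      have h2 := upper (m - 1 - i) i (by omega)
      have h3 := (hS.2.1 (i + (m - 1 - i), 0) ((col_cell m _ 0).2 ⟨by omega, rfl⟩)).2
      rw [hsum] at h3
      omega
    ext c
    obtain ⟨i, j⟩ := c
    show T (i, j) = T' (i, j)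
    by_cases hc : IsCell (List.replicate m 1) (i, j)
    · obtain ⟨hi, rfl⟩ := (col_cell m i j).1 hc
      rw [key T hT i hi, key T' hT' i hi]
    · rw [hT.1 _ hc, hT'.1 _ hc]
  · refine ⟨⟨fun c => if c.2 = 0 ∧ c.1 < m then c.1 + 1 else 0, ?_, ?_, ?_, ?_, ?_⟩⟩
    · intro c hc
      dsimp only
      rw [if_neg]
      intro ⟨h1, h2⟩
      exact hc ((col_cell m c.1 c.2).2 ⟨h2, h1⟩)
    · intro c hc
      obtain ⟨h1, h2⟩ := (col_cell m c.1 c.2).1 hc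
      dsimp only
      rw [if_pos ⟨h2, h1⟩, hsum]
      omega
    · intro c c' hc hc' h
      obtain ⟨h1, h2⟩ := (col_cell m c.1 c.2).1 hc
      obtain ⟨h1', h2'⟩ := (col_cell m c'.1 c'.2).1 hc'
      dsimp only at h
      rw [if_pos ⟨h2, h1⟩, if_pos ⟨h2', h1'⟩] at h
      exact Prod.ext (by omega) (h2.trans h2'.symm)
    · intro i j hc
      obtain ⟨_, h⟩ := (col_cell m i (j + 1)).1 hc
      omega
    · intro i j hc
      obtain ⟨hi, hj⟩ := (col_cell m (i + 1) j).1 hc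
      subst hj
      dsimp only
      rw [if_pos ⟨rfl, by omega⟩, if_pos ⟨rfl, hi⟩]
      omega

end SYTAux

namespace SYTAux

lemma cell3 (p q k i j : ℕ) : IsCell (p :: q :: List.replicate k 1) (i, j) ↔
    (i = 0 ∧ j < p) ∨ (i = 1 ∧ j < q) ∨ (2 ≤ i ∧ i ≤ k + 1 ∧ j = 0) := by
  rcases i with _ | (_ | i)
  · simp [IsCell]
  · simp [IsCell]
  · simp only [IsCell, List.getD_cons_succ, getD_rep]
    by_cases h : i < k <;> simp [h] <;> omega

lemma hook_cell (a b i j : ℕ) : IsCell ((a + 1) :: List.replicate b 1) (i, j) ↔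
    (i = 0 ∧ j < a + 1) ∨ (1 ≤ i ∧ i ≤ b ∧ j = 0) := by
  rcases i with _ | i
  · simp [IsCell]
  · simp only [IsCell, List.getD_cons_succ, getD_rep]
    by_cases h : i < b <;> simp [h] <;> omega

lemma hook_sum (a b : ℕ) : ((a + 1) :: List.replicate b 1).sum = a + b + 1 := by
  simp [List.sum_replicate]; omega

lemma sum3 (p q k : ℕ) : (p :: q :: List.replicate k 1).sum = p + q + k := by
  simp [List.sum_replicate]; omega

lemma hook_split (a b : ℕ) :
    sytCount ((a + 2) :: List.replicate (b + 1) 1) =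
      sytCount ((a + 1) :: List.replicate (b + 1) 1) +
      sytCount ((a + 2) :: List.replicate b 1) := by
  have hsum : ((a + 2) :: List.replicate (b + 1) 1).sum = a + b + 3 := by
    have := hook_sum (a + 1) (b + 1); simpa [show a + 1 + (b+1) + 1 = a + b + 3 by omega] using this
  rw [split2 _ (0, a + 1) (b + 1, 0) (by simp [Prod.ext_iff]) 
    ((hook_cell (a+1) (b+1) 0 (a+1)).2 (by omega))
    ((hook_cell (a+1) (b+1) (b+1) 0).2 (by omega))
    (by rw [hsum]; omega) ?_]
  · congr 1
    · rw [hsum]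
      rw [← hsum]
      apply card_del
      · intro c
        obtain ⟨i, j⟩ := c
        rw [hook_cell, hook_cell, Prod.ext_iff]
        simp only [Prod.fst, Prod.snd]
        omega
      · rw [hook_cell]; omega
      · rw [hook_sum, hsum]; omega
      · intro i j h
        rw [hook_cell] at h ⊢; omega
      · intro i j h
        rw [hook_cell] at h ⊢; omega
    · rw [hsum]
      rw [← hsum]
      apply card_del
      · intro c
        obtain ⟨i, j⟩ := c
        rw [hook_cell, hook_cell, Prod.ext_iff]
        simp only [Prod.fst, Prod.snd]
        omega
      · rw [hook_cell]; omega
      · rw [hook_sum, hsum]; omega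
      · intro i j h
        rw [hook_cell] at h ⊢; omega
      · intro i j h
        rw [hook_cell] at h ⊢; omega
  · -- hmax
    intro T c hT hc hval
    obtain ⟨i, j⟩ := c
    rcases (hook_cell (a+1) (b+1) i j).1 hc with ⟨rfl, hj⟩ | ⟨h1, h2, rfl⟩
    · left
      have : j = a + 1 := by
        by_contra hne
        have hcell : IsCell ((a + 2) :: List.replicate (b + 1) 1) (0, j + 1) :=
          (hook_cell (a+1) (b+1) 0 (j+1)).2 (by omega)
        have hlt := hT.2.2.2.1 0 j hcell
        have hle := (hT.2.1 _ hcell).2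
        omega
      rw [this]
    · right
      have : i = b + 1 := by
        by_contra hne
        have hcell : IsCell ((a + 2) :: List.replicate (b + 1) 1) (i + 1, 0) :=
          (hook_cell (a+1) (b+1) (i+1) 0).2 (by omega)
        have hlt := hT.2.2.2.2 i 0 hcell
        have hle := (hT.2.1 _ hcell).2
        omega
      rw [this]

lemma hook_count : ∀ b a, sytCount ((a + 1) :: List.replicate b 1) = (a + b).choose a := by
  intro b
  induction b with
  | zero =>
    intro a
    simp only [List.replicate_zero, Nat.add_zero, Nat.choose_self]
    exact row_count (a + 1)
  | succ b ihb =>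
    intro a
    induction a with
    | zero =>
      have : (1 : ℕ) :: List.replicate (b + 1) 1 = List.replicate (b + 2) 1 := by
        simp [List.replicate_succ]
      rw [show (0:ℕ) + 1 = 1 from rfl, this, col_count]
      simp
    | succ a iha =>
      have e0 : a + 1 + 1 = a + 2 := rfl
      rw [e0, hook_split a b, iha, ihb (a + 1)]
      have e1 : a + 1 + (b + 1) = (a + b + 1) + 1 := by omega
      have e2 : a + (b + 1) = a + b + 1 := by omega
      have e3 : a + 1 + b = a + b + 1 := by omega
      rw [e1, e2, e3]
      exact Nat.choose_succ_succ _ _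

end SYTAux

namespace SYTAux

lemma main_split (d k : ℕ) (hd : 2 ≤ d) (hk : 1 ≤ k) :
    sytCount ((d + 1) :: 2 :: List.replicate k 1) =
      sytCount (d :: 2 :: List.replicate k 1) +
      sytCount ((d + 1) :: 2 :: List.replicate (k - 1) 1) +
      sytCount ((d + 1) :: 1 :: List.replicate k 1) := by
  have hsum : ((d + 1) :: 2 :: List.replicate k 1).sum = d + k + 3 := by
    rw [sum3]; omega
  rw [split3 _ (0, d) (k + 1, 0) (1, 1)
    (by simp [Prod.ext_iff]) (by simp [Prod.ext_iff]) (by simp [Prod.ext_iff])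
    ((cell3 (d+1) 2 k 0 d).2 (by omega))
    ((cell3 (d+1) 2 k (k+1) 0).2 (by omega))
    ((cell3 (d+1) 2 k 1 1).2 (by omega))
    (by rw [hsum]; omega) ?_]
  · congr 1
    · congr 1
      · rw [hsum, ← hsum]
        apply card_del
        · intro c
          obtain ⟨i, j⟩ := c
          rw [cell3, cell3, Prod.ext_iff]
          simp only [Prod.fst, Prod.snd]
          omega
        · rw [cell3]; omega
        · rw [sum3, hsum]; omega
        · intro i j h
          rw [cell3] at h ⊢; omega
        · intro i j h
          rw [cell3] at h ⊢; omega
      · rw [hsum, ← hsum]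
        apply card_del
        · intro c
          obtain ⟨i, j⟩ := c
          rw [cell3, cell3, Prod.ext_iff]
          simp only [Prod.fst, Prod.snd]
          omega
        · rw [cell3]; omega
        · rw [sum3, hsum]; omega
        · intro i j h
          rw [cell3] at h ⊢; omega
        · intro i j h
          rw [cell3] at h ⊢; omega
    · rw [hsum, ← hsum]
      apply card_del
      · intro c
        obtain ⟨i, j⟩ := c
        rw [cell3, cell3, Prod.ext_iff]
        simp only [Prod.fst, Prod.snd]
        omega
      · rw [cell3]; omega
      · rw [sum3, hsum]; omega
      · intro i j h
        rw [cell3] at h ⊢; omega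
      · intro i j h
        rw [cell3] at h ⊢; omega
  · -- hmax
    intro T c hT hc hval
    obtain ⟨i, j⟩ := c
    rcases (cell3 (d+1) 2 k i j).1 hc with ⟨rfl, hj⟩ | ⟨rfl, hj⟩ | ⟨h1, h2, rfl⟩
    · left
      have : j = d := by
        by_contra hne
        have hcell : IsCell ((d + 1) :: 2 :: List.replicate k 1) (0, j + 1) :=
          (cell3 (d+1) 2 k 0 (j+1)).2 (by omega)
        have hlt := hT.2.2.2.1 0 j hcell
        have hle := (hT.2.1 _ hcell).2
        omega
      rw [this]
    · right; right
      have : j = 1 := by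
        by_contra hne
        have hcell : IsCell ((d + 1) :: 2 :: List.replicate k 1) (1, j + 1) :=
          (cell3 (d+1) 2 k 1 (j+1)).2 (by omega)
        have hlt := hT.2.2.2.1 1 j hcell
        have hle := (hT.2.1 _ hcell).2
        omega
      rw [this]
    · right; left
      have : i = k + 1 := by
        by_contra hne
        have hcell : IsCell ((d + 1) :: 2 :: List.replicate k 1) (i + 1, 0) :=
          (cell3 (d+1) 2 k (i+1) 0).2 (by omega)
        have hlt := hT.2.2.2.2 i 0 hcell
        have hle := (hT.2.1 _ hcell).2
        omega
      rw [this]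

end SYTAux

/-- For `n ≥ 6` and `1 < d < n - 4`, the number `F(n,d)` of standard Young tableaux of
shape `(d+1, 2, 1^(n-d-3))` satisfies `F(n,d) = F(n-1,d-1) + F(n-1,d) + C(n-2, d)`. -/
theorem syt_betti_recursion (n d : ℕ) (hn : 6 ≤ n) (hd1 : 1 < d) (hd2 : d < n - 4) :
    sytCount ((d + 1) :: 2 :: List.replicate (n - d - 3) 1) =
      sytCount (((d - 1) + 1) :: 2 :: List.replicate ((n - 1) - (d - 1) - 3) 1) +
      sytCount ((d + 1) :: 2 :: List.replicate ((n - 1) - d - 3) 1) +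
      (n - 2).choose d := by
  have hd : 2 ≤ d := hd1
  have hk : 2 ≤ n - d - 3 := by omega
  rw [SYTAux.main_split d (n - d - 3) hd (by omega)]
  congr 1
  · congr 1
    · rw [show d - 1 + 1 = d from by omega, show (n - 1) - (d - 1) - 3 = n - d - 3 from by omega]
    · rw [show (n - 1) - d - 3 = n - d - 3 - 1 from by omega]
  · rw [show ((1 : ℕ) :: List.replicate (n - d - 3) 1) = List.replicate (n - d - 3 + 1) 1 from by
      simp [List.replicate_succ]]
    rw [SYTAux.hook_count (n - d - 3 + 1) d]
    congr 1
    omega
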